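/- Let r,s,x be nonzero complex numbers with rs a primitive ℓ-th root of unity for some positive integer ℓ and rs^{-1} not a root of unity. Then the representation π_x^ℓ of the algebra generated by e_i, f_i, k_i^{±1}, l_i^{±1} (i=1,2,3) on the 4ℓ-dimensional space V^ℓ is irreducible: every nonzero subspace W of V^ℓ invariant under all the operators e_i, f_i, k_i^{±1}, l_i^{±1} equals V^ℓ. -/

import Mathlib

/-!
The composite `e₁e₂e₃e₂` sends `1_p` to `c (rs)^{-p} 1_p` with `c ≠ 0` and kills the other basis
vectors, so it is diagonal, and since `rs` is a primitive `ℓ`-th root of unity its eigenvalue on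
`1_p` differs from all its other eigenvalues. A Lagrange interpolation polynomial in it therefore
projects an invariant subspace onto the line of `1_p` whenever the subspace has a vector with a
nonzero `1_p`-coordinate, and `e₁, e₂, e₃` produce such a vector from any nonzero one. From `1_p`,
`k₁` reaches every `1_q`, and `f₁, f₂, f₃` then reach `2_q, 3_q, 4_q`.
-/

noncomputable section

/-- `V^ℓ` with basis `j_p`, `j ∈ {1,2,3,4}` (coded as `Fin 4`), `p ∈ ℤ/ℓℤ`. -/
abbrev VL (ℓ : ℕ) := Fin 4 × ZMod ℓ → ℂ

variable (ℓ : ℕ)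

/-- `e₁(2_p) = (1−r⁻¹s) 1_{p+1}`, other basis vectors killed. -/
def e1 (r s : ℂ) : VL ℓ → VL ℓ := fun v q =>
  if q.1 = 0 then (1 - r⁻¹ * s) * v (1, q.2 - 1) else 0

/-- `e₂(3_p) = (r⁻¹s−1) 2_p`, `e₂(1_p) = (r⁻¹s−1) x (rs)^{-p} 4_p`, others killed. -/
def e2 [NeZero ℓ] (r s x : ℂ) : VL ℓ → VL ℓ := fun v q =>
  if q.1 = 1 then (r⁻¹ * s - 1) * v (2, q.2)
  else if q.1 = 3 then (r⁻¹ * s - 1) * x * (r * s) ^ (-(q.2.val : ℤ)) * v (0, q.2) else 0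

/-- `e₃(4_p) = (1−rs⁻¹) 3_{p−1}`, others killed. -/
def e3 (r s : ℂ) : VL ℓ → VL ℓ := fun v q =>
  if q.1 = 2 then (1 - r * s⁻¹) * v (3, q.2 + 1) else 0

/-- `f₁(1_p) = (1−rs⁻¹) 2_p`, others killed. -/
def f1 (r s : ℂ) : VL ℓ → VL ℓ := fun v q =>
  if q.1 = 1 then (1 - r * s⁻¹) * v (0, q.2) else 0

/-- `f₂(2_p) = (rs⁻¹−1) 3_p`, others killed. -/
def f2 (r s : ℂ) : VL ℓ → VL ℓ := fun v q =>
  if q.1 = 2 then (r * s⁻¹ - 1) * v (1, q.2) else 0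

/-- `f₃(3_p) = (1−r⁻¹s) 4_p`, others killed. -/
def f3 (r s : ℂ) : VL ℓ → VL ℓ := fun v q =>
  if q.1 = 3 then (1 - r⁻¹ * s) * v (2, q.2) else 0

/-- `k₁(y_p) = (s,r,1,1)_y y_{p+1}`. -/
def k1 (r s : ℂ) : VL ℓ → VL ℓ := fun v q => ![s, r, 1, 1] q.1 * v (q.1, q.2 - 1)

/-- inverse of `k₁`. -/
def k1inv (r s : ℂ) : VL ℓ → VL ℓ := fun v q => (![s, r, 1, 1] q.1)⁻¹ * v (q.1, q.2 + 1)

/-- `k₂(y_p) = (1,s,s,1)_y y_p`. -/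
def k2 (r s : ℂ) : VL ℓ → VL ℓ := fun v q => ![1, s, s, 1] q.1 * v q

/-- inverse of `k₂`. -/
def k2inv (r s : ℂ) : VL ℓ → VL ℓ := fun v q => (![1, s, s, 1] q.1)⁻¹ * v q

/-- `k₃(y_p) = (1,1,r,s)_y y_{p−1}`. -/
def k3 (r s : ℂ) : VL ℓ → VL ℓ := fun v q => ![1, 1, r, s] q.1 * v (q.1, q.2 + 1)

/-- inverse of `k₃`. -/
def k3inv (r s : ℂ) : VL ℓ → VL ℓ := fun v q => (![1, 1, r, s] q.1)⁻¹ * v (q.1, q.2 - 1)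

theorem Submodule.single_mem_of_mul_mem {ι K : Type*} [Fintype ι] [DecidableEq ι] [Field K]
    {W : Submodule K (ι → K)} {d : ι → K} (hW : ∀ v ∈ W, d * v ∈ W) {i : ι}
    (hd : ∀ j ≠ i, d j ≠ d i) {v : ι → K} (hv : v ∈ W) (hvi : v i ≠ 0) :
    Pi.single i 1 ∈ W := by
  have hprod : ∀ S : Finset ι, (∏ j ∈ S, (d - fun _ => d j)) * v ∈ W := by
    intro S
    induction S using Finset.induction_on with
    | empty => simpa using hv
    | insert j S hj ih =>
      rw [Finset.prod_insert hj, mul_assoc, sub_mul]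
      exact W.sub_mem (hW _ ih) (W.smul_mem (d j) ih)
  have hlagrange : (∏ j ∈ Finset.univ.erase i, (d - fun _ => d j)) * v =
      ((∏ j ∈ Finset.univ.erase i, (d i - d j)) * v i) • Pi.single i 1 := by
    ext k
    rcases eq_or_ne k i with rfl | hk
    · simp [Finset.prod_apply]
    · have hzero := Finset.prod_eq_zero (f := fun j => d k - d j)
        (Finset.mem_erase.2 ⟨hk, Finset.mem_univ k⟩) (sub_self (d k))
      simp [Finset.prod_apply, hk, hzero]
  have hc : (∏ j ∈ Finset.univ.erase i, (d i - d j)) * v i ≠ 0 :=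
    mul_ne_zero (Finset.prod_ne_zero_iff.2 fun j hj =>
      sub_ne_zero.2 (hd j (Finset.ne_of_mem_erase hj)).symm) hvi
  exact (W.smul_mem_iff hc).1 (hlagrange ▸ hprod _)

theorem Submodule.eq_top_of_forall_single_mem {ι K : Type*} [Finite ι] [DecidableEq ι] [Field K]
    {W : Submodule K (ι → K)} (h : ∀ i, Pi.single i 1 ∈ W) : W = ⊤ := by
  rw [eq_top_iff, ← (Pi.basisFun K ι).span_eq, Submodule.span_le]
  rintro _ ⟨i, rfl⟩
  simpa using h i

theorem ZMod.induction_add_one {ℓ : ℕ} [NeZero ℓ] {P : ZMod ℓ → Prop} {p : ZMod ℓ} (hp : P p)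
    (h : ∀ q, P q → P (q + 1)) (q : ZMod ℓ) : P q := by
  have hP : ∀ n : ℕ, P (p + n) := by
    intro n
    induction n with
    | zero => simpa using hp
    | succ n ih => simpa [add_assoc] using h _ ih
  simpa using hP (q - p).val

theorem inv_mul_ne_one {K : Type*} [Field K] {a b : K} (h : a * b⁻¹ ≠ 1) : a⁻¹ * b ≠ 1 := by
  rwa [ne_eq, ← inv_eq_one, mul_inv_rev, inv_inv, mul_comm]

def loopWeight (r s x : ℂ) (q : Fin 4 × ZMod ℓ) : ℂ :=
  if q.1 = 0 then
    (1 - r⁻¹ * s) * (r⁻¹ * s - 1) * (1 - r * s⁻¹) * (r⁻¹ * s - 1) * x * (r * s) ^ (-(q.2.val : ℤ))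
  else 0

section

variable {ℓ} {r s x : ℂ}

theorem k1_single_zero (p : ZMod ℓ) :
    k1 ℓ r s (Pi.single (0, p) 1) = s • Pi.single (0, p + 1) 1 := by
  ext ⟨j, q⟩
  fin_cases j <;> simp [k1, Pi.single_apply, sub_eq_iff_eq_add]

theorem f1_single_zero (p : ZMod ℓ) :
    f1 ℓ r s (Pi.single (0, p) 1) = (1 - r * s⁻¹) • Pi.single (1, p) 1 := by
  ext ⟨j, q⟩
  fin_cases j <;> simp [f1, Pi.single_apply]

theorem f2_single_one (p : ZMod ℓ) :
    f2 ℓ r s (Pi.single (1, p) 1) = (r * s⁻¹ - 1) • Pi.single (2, p) 1 := by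
  ext ⟨j, q⟩
  fin_cases j <;> simp [f2, Pi.single_apply]

theorem f3_single_two (p : ZMod ℓ) :
    f3 ℓ r s (Pi.single (2, p) 1) = (1 - r⁻¹ * s) • Pi.single (3, p) 1 := by
  ext ⟨j, q⟩
  fin_cases j <;> simp [f3, Pi.single_apply]

variable [NeZero ℓ]

theorem e1_e2_e3_e2 (v : VL ℓ) :
    e1 ℓ r s (e2 ℓ r s x (e3 ℓ r s (e2 ℓ r s x v))) = loopWeight ℓ r s x * v := by
  ext ⟨j, q⟩
  fin_cases j
  · simp only [e1, e2, e3, loopWeight, Pi.mul_apply, Fin.zero_eta, Fin.isValue, ↓reduceIte,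
      Fin.reduceEq, sub_add_cancel]
    ring
  all_goals simp [e1, loopWeight]

theorem loopWeight_ne (hprim : IsPrimitiveRoot (r * s) ℓ) (hx : x ≠ 0) (hrs : r * s⁻¹ ≠ 1)
    (p : ZMod ℓ) : ∀ q ≠ (0, p), loopWeight ℓ r s x q ≠ loopWeight ℓ r s x (0, p) := by
  have hsr := inv_mul_ne_one hrs
  have hK : (1 - r⁻¹ * s) * (r⁻¹ * s - 1) * (1 - r * s⁻¹) * (r⁻¹ * s - 1) * x ≠ 0 := by
    simp [sub_eq_zero, hx, hsr, hrs.symm, hsr.symm]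
  rintro ⟨j, q⟩ hq
  by_cases hj : j = 0
  · subst hj
    have hqp : q.val ≠ p.val := fun h => hq (by rw [ZMod.val_injective ℓ h])
    have hμ : (r * s) ^ (-(q.val : ℤ)) ≠ (r * s) ^ (-(p.val : ℤ)) := by
      rw [zpow_neg, zpow_neg, zpow_natCast, zpow_natCast, ne_eq, inv_inj]
      exact fun h => hqp (hprim.pow_inj q.val_lt p.val_lt h)
    simpa only [loopWeight, if_true, ne_eq, mul_right_inj' hK] using hμ
  · simp [loopWeight, hj, hK, zpow_ne_zero _ (hprim.ne_zero (NeZero.ne ℓ))]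

theorem exists_mem_apply_zero_ne_zero {W : Submodule ℂ (VL ℓ)}
    (he1 : ∀ v ∈ W, e1 ℓ r s v ∈ W) (he2 : ∀ v ∈ W, e2 ℓ r s x v ∈ W)
    (he3 : ∀ v ∈ W, e3 ℓ r s v ∈ W) (hrs : r * s⁻¹ ≠ 1) {v : VL ℓ} (hv : v ∈ W) (hv0 : v ≠ 0) :
    ∃ w ∈ W, ∃ p, w (0, p) ≠ 0 := by
  have hsr := inv_mul_ne_one hrs
  obtain ⟨⟨j, p⟩, hjp⟩ := Function.ne_iff.1 hv0
  fin_cases j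
  · exact ⟨v, hv, p, hjp⟩
  · exact ⟨_, he1 _ hv, p + 1, by simpa [e1, sub_eq_zero, hsr.symm] using hjp⟩
  · exact ⟨_, he1 _ (he2 _ hv), p + 1, by simpa [e1, e2, sub_eq_zero, hsr, hsr.symm] using hjp⟩
  · exact ⟨_, he1 _ (he2 _ (he3 _ hv)), p,
      by simpa [e1, e2, e3, sub_eq_zero, hsr, hsr.symm, hrs.symm] using hjp⟩

end

theorem stmt14_general (ℓ : ℕ) [NeZero ℓ] (r s x : ℂ)
    (hs : s ≠ 0) (hx : x ≠ 0)
    (hprim : IsPrimitiveRoot (r * s) ℓ)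
    (hroot : ∀ k : ℕ, 0 < k → (r * s⁻¹) ^ k ≠ 1)
    (W : Submodule ℂ (VL ℓ)) (hW : W ≠ ⊥)
    (he1 : ∀ v ∈ W, e1 ℓ r s v ∈ W) (he2 : ∀ v ∈ W, e2 ℓ r s x v ∈ W)
    (he3 : ∀ v ∈ W, e3 ℓ r s v ∈ W)
    (hf1 : ∀ v ∈ W, f1 ℓ r s v ∈ W) (hf2 : ∀ v ∈ W, f2 ℓ r s v ∈ W)
    (hf3 : ∀ v ∈ W, f3 ℓ r s v ∈ W)
    (hk1 : ∀ v ∈ W, k1 ℓ r s v ∈ W) :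
    W = ⊤ := by
  have hrs : r * s⁻¹ ≠ 1 := by simpa using hroot 1 one_pos
  have hsr := inv_mul_ne_one hrs
  obtain ⟨v, hv, hv0⟩ := W.ne_bot_iff.1 hW
  obtain ⟨w, hw, p, hp⟩ := exists_mem_apply_zero_ne_zero he1 he2 he3 hrs hv hv0
  have hloop : ∀ v ∈ W, loopWeight ℓ r s x * v ∈ W := fun v hv =>
    e1_e2_e3_e2 v ▸ he1 _ (he2 _ (he3 _ (he2 _ hv)))
  have h0 : ∀ q, Pi.single (0, q) 1 ∈ W :=
    ZMod.induction_add_one (W.single_mem_of_mul_mem hloop (loopWeight_ne hprim hx hrs p) hw hp)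
      fun q hq => (W.smul_mem_iff hs).1 (k1_single_zero q ▸ hk1 _ hq)
  have h1 : ∀ q, Pi.single (1, q) 1 ∈ W := fun q =>
    (W.smul_mem_iff (sub_ne_zero.2 hrs.symm)).1 (f1_single_zero q ▸ hf1 _ (h0 q))
  have h2 : ∀ q, Pi.single (2, q) 1 ∈ W := fun q =>
    (W.smul_mem_iff (sub_ne_zero.2 hrs)).1 (f2_single_one q ▸ hf2 _ (h1 q))
  have h3 : ∀ q, Pi.single (3, q) 1 ∈ W := fun q =>
    (W.smul_mem_iff (sub_ne_zero.2 hsr.symm)).1 (f3_single_two q ▸ hf3 _ (h2 q))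
  refine W.eq_top_of_forall_single_mem fun ⟨j, q⟩ => ?_
  fin_cases j
  exacts [h0 q, h1 q, h2 q, h3 q]

/-- if `rs` is a primitive `ℓ`-th root of unity and `rs⁻¹` is not a root
of unity, the representation `π_x^ℓ` on the `4ℓ`-dimensional space `V^ℓ` is irreducible:
every nonzero subspace invariant under the operators `e_i, f_i, k_i^{±1}, l_i^{±1}`
(`l_i` being `k_i` with `r` and `s` interchanged) equals `V^ℓ`. -/
theorem stmt14 (ℓ : ℕ) [NeZero ℓ] (hℓ : 0 < ℓ) (r s x : ℂ)
    (hr : r ≠ 0) (hs : s ≠ 0) (hx : x ≠ 0)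
    (hprim : IsPrimitiveRoot (r * s) ℓ)
    (hroot : ∀ k : ℕ, 0 < k → (r * s⁻¹) ^ k ≠ 1)
    (W : Submodule ℂ (VL ℓ)) (hW : W ≠ ⊥)
    (he1 : ∀ v ∈ W, e1 ℓ r s v ∈ W) (he2 : ∀ v ∈ W, e2 ℓ r s x v ∈ W)
    (he3 : ∀ v ∈ W, e3 ℓ r s v ∈ W)
    (hf1 : ∀ v ∈ W, f1 ℓ r s v ∈ W) (hf2 : ∀ v ∈ W, f2 ℓ r s v ∈ W)
    (hf3 : ∀ v ∈ W, f3 ℓ r s v ∈ W)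
    (hk1 : ∀ v ∈ W, k1 ℓ r s v ∈ W) (hk1' : ∀ v ∈ W, k1inv ℓ r s v ∈ W)
    (hk2 : ∀ v ∈ W, k2 ℓ r s v ∈ W) (hk2' : ∀ v ∈ W, k2inv ℓ r s v ∈ W)
    (hk3 : ∀ v ∈ W, k3 ℓ r s v ∈ W) (hk3' : ∀ v ∈ W, k3inv ℓ r s v ∈ W)
    (hl1 : ∀ v ∈ W, k1 ℓ s r v ∈ W) (hl1' : ∀ v ∈ W, k1inv ℓ s r v ∈ W)
    (hl2 : ∀ v ∈ W, k2 ℓ s r v ∈ W) (hl2' : ∀ v ∈ W, k2inv ℓ s r v ∈ W)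
    (hl3 : ∀ v ∈ W, k3 ℓ s r v ∈ W) (hl3' : ∀ v ∈ W, k3inv ℓ s r v ∈ W) :
    W = ⊤ :=
  stmt14_general ℓ r s x hs hx hprim hroot W hW he1 he2 he3 hf1 hf2 hf3 hk1

end
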